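/- For every n and every t with 2 ≤ t ≤ n−1, the signless Laplacian spectral radius of the Turán graph satisfies q₁(T_{n,t}) < q₁(T_{n,t+1}). -/

import Mathlib

open SimpleGraph

/-- The signless Laplacian matrix `Q(G) = D(G) + A(G)` of a simple graph. -/
noncomputable def signlessLaplacian {V : Type*} [Fintype V] [DecidableEq V]
    (G : SimpleGraph V) : Matrix V V ℝ := by
  classical exact Matrix.diagonal (fun v => (G.degree v : ℝ)) + G.adjMatrix ℝ

/-- The signless Laplacian spectral radius: the largest eigenvalue of `Q(G)`. -/
noncomputable def q1 {V : Type*} [Fintype V] [DecidableEq V] (G : SimpleGraph V) : ℝ :=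
  sSup {μ : ℝ | ∃ x : V → ℝ, x ≠ 0 ∧ (signlessLaplacian G).mulVec x = μ • x}

/-- The join `G ∇ H` of two simple graphs. -/
def gJoin {α β : Type*} (G : SimpleGraph α) (H : SimpleGraph β) : SimpleGraph (α ⊕ β) where
  Adj x y :=
    Sum.elim (fun a => Sum.elim (fun b => G.Adj a b) (fun _ => True) y)
             (fun a => Sum.elim (fun _ => True) (fun b => H.Adj a b) y) x
  symm := ⟨by rintro (a|a) (b|b) h <;> simp_all [SimpleGraph.adj_comm]⟩
  loopless := ⟨by rintro (a|a) h <;> simp_all⟩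

/-- `G` is a complete multipartite graph with exactly `t` (nonempty) parts. -/
def IsCompleteMultipartite' {α : Type*} (G : SimpleGraph α) (t : ℕ) : Prop :=
  ∃ f : α → Fin t, Function.Surjective f ∧ ∀ u v, G.Adj u v ↔ f u ≠ f v

/-- The kite graph `Ki_{n,ω}`: a clique on `{0,…,ω-1}` together with a path on the
remaining vertices, attached to the clique by a bridge. -/
def kite (n ω : ℕ) : SimpleGraph (Fin n) where
  Adj i j := i ≠ j ∧ (((i : ℕ) < ω ∧ (j : ℕ) < ω) ∨
    ((i : ℕ) + 1 = (j : ℕ) ∧ ω ≤ (j : ℕ)) ∨ ((j : ℕ) + 1 = (i : ℕ) ∧ ω ≤ (i : ℕ)))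
  symm := ⟨by rintro i j ⟨h1, h2⟩; exact ⟨h1.symm, by tauto⟩⟩
  loopless := ⟨fun i h => h.1 rfl⟩

/-- The closed-form bound `((3ω-4)k + 3r - 2 + √(k²ω² + ((2r+4)ω-8r)k + (r-2)²))/2`. -/
noncomputable def turanBound (ω k r : ℕ) : ℝ :=
  ((3 * (ω : ℝ) - 4) * k + 3 * r - 2 +
    Real.sqrt ((k : ℝ)^2 * (ω : ℝ)^2 + ((2 * (r : ℝ) + 4) * ω - 8 * r) * k + ((r : ℝ) - 2)^2)) / 2

/-! For a complete multipartite graph with `s(v)` the size of the part containing `v`, the vector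
`x v = (c + 2 s(v))⁻¹` satisfies `Q x = (n + c) x` exactly when `∑ v, x v = 1`: a vertex sees
`n - s(v)` neighbours and all of `x` outside its own part. For `c ≥ 0` this vector is positive,
so by the Perron–Frobenius comparison `n + c` is `q₁`. For `T_{n,t}` the sum is a decreasing
function of `c` equal to `t / 2 ≥ 1` at `c = 0`, hence `q₁(T_{n,t}) = n + c_t` for its root
`c_t`. Passing from `t` to `t + 1` parts strictly increases this sum at every `c ≥ 0`, which
forces `c_t < c_{t+1}`. -/

open Finset Matrix

theorem Matrix.IsSymm.abs_le_of_pos_eigenvector {ι : Type*} [Fintype ι] {A : Matrix ι ι ℝ}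
    (hA : A.IsSymm) (hA0 : ∀ i j, 0 ≤ A i j) {x y : ι → ℝ} {r μ : ℝ}
    (hx : ∀ i, 0 < x i) (hAx : A *ᵥ x = r • x) (hy : y ≠ 0) (hAy : A *ᵥ y = μ • y) :
    |μ| ≤ r := by
  set z : ι → ℝ := fun i => |y i|
  have hz : |μ| • z ≤ A *ᵥ z := fun i => by
    calc |μ| * |y i| = |(A *ᵥ y) i| := by simp [hAy, abs_mul]
      _ ≤ ∑ j, |A i j * y j| := abs_sum_le_sum_abs _ _
      _ = (A *ᵥ z) i := by simp [mulVec, dotProduct, abs_mul, abs_of_nonneg (hA0 _ _), z]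
  have hxz : 0 < x ⬝ᵥ z := by
    obtain ⟨i, hi⟩ := Function.ne_iff.1 hy
    exact sum_pos' (fun j _ => mul_nonneg (hx j).le (abs_nonneg _))
      ⟨i, mem_univ i, mul_pos (hx i) (abs_pos.2 hi)⟩
  refine le_of_mul_le_mul_right ?_ hxz
  calc |μ| * (x ⬝ᵥ z) = x ⬝ᵥ (|μ| • z) := by rw [dotProduct_smul, smul_eq_mul]
    _ ≤ x ⬝ᵥ (A *ᵥ z) := dotProduct_le_dotProduct_of_nonneg_left hz fun i => (hx i).le
    _ = (A *ᵥ x) ⬝ᵥ z := by rw [dotProduct_mulVec, ← mulVec_transpose, hA.eq]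
    _ = r * (x ⬝ᵥ z) := by rw [hAx, smul_dotProduct, smul_eq_mul]

section SignlessLaplacian
variable {V : Type*} [Fintype V] [DecidableEq V]

lemma signlessLaplacian_isSymm (G : SimpleGraph V) : (signlessLaplacian G).IsSymm := by
  classical exact (isSymm_diagonal _).add (G.isSymm_adjMatrix)

lemma signlessLaplacian_nonneg (G : SimpleGraph V) (v w : V) : 0 ≤ signlessLaplacian G v w := by
  classical
  simp only [signlessLaplacian, Matrix.add_apply, diagonal_apply, adjMatrix_apply]
  positivity

lemma signlessLaplacian_mulVec_apply (G : SimpleGraph V) [DecidableRel G.Adj] (x : V → ℝ)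
    (v : V) :
    (signlessLaplacian G *ᵥ x) v = G.degree v * x v + ∑ w ∈ G.neighborFinset v, x w := by
  simp only [signlessLaplacian, add_mulVec, Pi.add_apply, mulVec_diagonal, adjMatrix_mulVec_apply]
  congr!

lemma q1_eq_of_pos_eigenvector [Nonempty V] (G : SimpleGraph V) {x : V → ℝ} {r : ℝ}
    (hx : ∀ v, 0 < x v) (h : signlessLaplacian G *ᵥ x = r • x) : q1 G = r := by
  refine IsGreatest.csSup_eq
    ⟨⟨x, fun h0 => (hx (Classical.arbitrary V)).ne' (congrFun h0 _), h⟩, ?_⟩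
  rintro μ ⟨y, hy, hμ⟩
  exact (le_abs_self μ).trans <|
    (signlessLaplacian_isSymm G).abs_le_of_pos_eigenvector (signlessLaplacian_nonneg G) hx h hy hμ

end SignlessLaplacian

section CompleteMultipartite
variable {V ι : Type*} [Fintype V] [DecidableEq ι]

def partSize (f : V → ι) (v : V) : ℕ := #{w | f w = f v}

lemma sum_comp_partSize (f : V → ι) {s : Finset ι} (hs : ∀ v, f v ∈ s) (g : ℕ → ℝ) :
    ∑ v, g (partSize f v) = ∑ i ∈ s, #{v | f v = i} * g #{v | f v = i} := by
  rw [← sum_fiberwise_of_maps_to fun v _ => hs v]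
  refine sum_congr rfl fun i _ => ?_
  rw [sum_congr rfl fun v hv => by rw [partSize, (mem_filter.1 hv).2], sum_const, nsmul_eq_mul]

variable [DecidableEq V] {G : SimpleGraph V} {f : V → ι}

lemma signlessLaplacian_mulVec_partSize_inv (hG : ∀ u v, G.Adj u v ↔ f u ≠ f v) {c : ℝ}
    (hc : ∀ v, c + 2 * partSize f v ≠ 0) (hsum : ∑ v, (c + 2 * partSize f v)⁻¹ = 1) :
    signlessLaplacian G *ᵥ (fun v => (c + 2 * partSize f v)⁻¹) =
      (Fintype.card V + c) • fun v => (c + 2 * partSize f v)⁻¹ := by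
  classical
  ext v
  have hnbr : G.neighborFinset v = ({w | ¬f w = f v} : Finset V) := by
    ext w; simp [hG, eq_comm]
  have hdeg : (G.degree v : ℝ) = Fintype.card V - partSize f v := by
    rw [← card_neighborFinset_eq_degree, hnbr, eq_sub_iff_add_eq, partSize, ← Nat.cast_add,
      add_comm, card_filter_add_card_filter_not, card_univ]
  have hpart : ∑ w ∈ {w | f w = f v}, (c + 2 * partSize f w)⁻¹ =
      partSize f v * (c + 2 * partSize f v)⁻¹ := by
    rw [sum_congr rfl fun w hw => by rw [partSize, (mem_filter.1 hw).2], sum_const, nsmul_eq_mul,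
      partSize]
  have hrest : ∑ w ∈ {w | ¬f w = f v}, (c + 2 * partSize f w)⁻¹ =
      1 - partSize f v * (c + 2 * partSize f v)⁻¹ := by
    rw [← hsum, ← sum_filter_add_sum_filter_not univ (fun w => f w = f v), hpart,
      add_sub_cancel_left]
  rw [signlessLaplacian_mulVec_apply, hdeg, hnbr, hrest, Pi.smul_apply, smul_eq_mul]
  linear_combination -mul_inv_cancel₀ (hc v)

theorem q1_eq_of_sum_partSize_inv (hG : ∀ u v, G.Adj u v ↔ f u ≠ f v) {c : ℝ} (hc : 0 ≤ c)
    (hsum : ∑ v, (c + 2 * partSize f v)⁻¹ = 1) : q1 G = Fintype.card V + c := by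
  have : Nonempty V := by
    by_contra hV
    simp [not_nonempty_iff.1 hV] at hsum
  have hpos : ∀ v, 0 < c + 2 * partSize f v := fun v => by
    have : 0 < partSize f v := card_pos.2 ⟨v, by simp⟩
    positivity
  exact q1_eq_of_pos_eigenvector G (fun v => inv_pos.2 (hpos v))
    (signlessLaplacian_mulVec_partSize_inv hG (fun v => (hpos v).ne') hsum)

end CompleteMultipartite

lemma card_filter_fin_mod_eq {n t i : ℕ} (ht : 0 < t) (hi : i < t) :
    #{w : Fin n | (w : ℕ) % t = i} = n / t + if i < n % t then 1 else 0 := by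
  calc #{w : Fin n | (w : ℕ) % t = i} = #{w ∈ range n | w % t = i} := by
        rw [card_filter, card_filter,
          Fin.sum_univ_eq_sum_range (fun w => if w % t = i then 1 else 0)]
    _ = Nat.count (· ≡ i [MOD t]) n := by
        simp [Nat.count_eq_card_filter_range, Nat.ModEq, Nat.mod_eq_of_lt hi]
    _ = n / t + if i < n % t then 1 else 0 := by
        rw [Nat.count_modEq_card _ ht, Nat.mod_eq_of_lt hi]

/-- `∑ v, (c + 2 s(v))⁻¹` for a complete `t`-partite graph with `r` parts of size `k + 1` and
`t - r` parts of size `k`, where `s(v)` is the size of the part of `v`. -/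
noncomputable def turanSecular (t k r : ℕ) (c : ℝ) : ℝ :=
  r * (k + 1) / (c + 2 * (k + 1)) + (t - r) * k / (c + 2 * k)

lemma sum_partSize_inv_turanGraph (n : ℕ) {t : ℕ} (ht : 0 < t) (c : ℝ) :
    ∑ v : Fin n, (c + 2 * partSize (fun v : Fin n => (v : ℕ) % t) v)⁻¹ =
      turanSecular t (n / t) (n % t) c := by
  have hr : n % t < t := Nat.mod_lt n ht
  rw [sum_comp_partSize _ (fun v => mem_range.2 (Nat.mod_lt _ ht)) fun s => (c + 2 * s)⁻¹,
    ← sum_range_add_sum_Ico _ hr.le]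
  have hbig : ∀ i ∈ range (n % t), #{v : Fin n | (v : ℕ) % t = i} = n / t + 1 := by
    intro i hi
    rw [card_filter_fin_mod_eq ht ((mem_range.1 hi).trans hr), if_pos (mem_range.1 hi)]
  have hsmall : ∀ i ∈ Ico (n % t) t, #{v : Fin n | (v : ℕ) % t = i} = n / t := by
    intro i hi
    rw [card_filter_fin_mod_eq ht (mem_Ico.1 hi).2, if_neg (mem_Ico.1 hi).1.not_gt, add_zero]
  rw [sum_congr rfl fun i hi => congrArg (fun s : ℕ => (s : ℝ) * (c + 2 * s)⁻¹) (hbig i hi),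
    sum_congr rfl fun i hi => congrArg (fun s : ℕ => (s : ℝ) * (c + 2 * s)⁻¹) (hsmall i hi),
    sum_const, sum_const, card_range, Nat.card_Ico, turanSecular, nsmul_eq_mul, nsmul_eq_mul,
    Nat.cast_sub hr.le]
  push_cast
  ring

lemma turanSecular_antitoneOn {t k r : ℕ} (hr : r ≤ t) (hk : 1 ≤ k) :
    AntitoneOn (turanSecular t k r) (Set.Ici 0) := by
  intro c₁ hc₁ c₂ _ hc
  have hc₁ : (0 : ℝ) ≤ c₁ := hc₁
  have hrt : (0 : ℝ) ≤ t - r := sub_nonneg.2 (by exact_mod_cast hr)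
  unfold turanSecular
  gcongr

lemma turanSecular_le_div {t k r : ℕ} (hr : r ≤ t) (hk : 1 ≤ k) {c : ℝ} (hc : 0 ≤ c) :
    turanSecular t k r c ≤ (t * k + r) / (c + 2 * k) := by
  have hrt : (0 : ℝ) ≤ t - r := sub_nonneg.2 (by exact_mod_cast hr)
  have hk : (1 : ℝ) ≤ k := by exact_mod_cast hk
  calc turanSecular t k r c ≤ r * (k + 1) / (c + 2 * k) + (t - r) * k / (c + 2 * k) := by
        unfold turanSecular; gcongr; linarith
    _ = (t * k + r) / (c + 2 * k) := by ring

lemma div_lt_turanSecular {t k r : ℕ} (hr : r < t) (hk : 1 ≤ k) {c : ℝ} (hc : 0 ≤ c) :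
    (t * k + r) / (c + 2 * (k + 1)) < turanSecular t k r c := by
  have hrt : (0 : ℝ) < t - r := sub_pos.2 (by exact_mod_cast hr)
  have hk : (1 : ℝ) ≤ k := by exact_mod_cast hk
  calc (t * k + r) / (c + 2 * (k + 1))
        = r * (k + 1) / (c + 2 * (k + 1)) + (t - r) * k / (c + 2 * (k + 1)) := by ring
    _ < turanSecular t k r c := by
        unfold turanSecular
        gcongr
        linarith

lemma exists_turanSecular_eq_one {t k r : ℕ} (ht : 2 ≤ t) (hr : r ≤ t) (hk : 1 ≤ k) :
    ∃ c, 0 ≤ c ∧ turanSecular t k r c = 1 := by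
  set b : ℝ := t * k + r
  have hk' : (1 : ℝ) ≤ k := by exact_mod_cast hk
  have ht' : (2 : ℝ) ≤ t := by exact_mod_cast ht
  have hb : 0 < b := by positivity
  have hcont : ContinuousOn (turanSecular t k r) (Set.Icc 0 b) := by
    unfold turanSecular
    fun_prop (disch := intro c hc; linarith [hc.1])
  have h0 : turanSecular t k r 0 = t / 2 := by
    unfold turanSecular
    field_simp
    ring
  have hb1 : turanSecular t k r b ≤ 1 :=
    (turanSecular_le_div hr hk hb.le).trans <| (div_le_one (by positivity)).2 (by linarith)
  obtain ⟨c, hc, hc1⟩ := intermediate_value_Icc' hb.le hcont ⟨hb1, by linarith⟩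
  exact ⟨c, hc.1, hc1⟩

lemma turanSecular_lt_succ {n t : ℕ} (ht : 0 < t) (htn : t + 1 ≤ n) {c : ℝ} (hc : 0 ≤ c) :
    turanSecular t (n / t) (n % t) c < turanSecular (t + 1) (n / (t + 1)) (n % (t + 1)) c := by
  have hn : t * (n / t) + n % t = n := Nat.div_add_mod n t
  have hn' : (t + 1) * (n / (t + 1)) + n % (t + 1) = n := Nat.div_add_mod n (t + 1)
  have hk' : 1 ≤ n / (t + 1) := (Nat.one_le_div_iff t.succ_pos).2 htn
  have hkk : n / (t + 1) ≤ n / t := Nat.div_le_div_left t.le_succ ht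
  -- Either the part size drops and every part shrinks, or it stays `k` and `k (k + 1)` vertices
  -- move from parts of size `k + 1` to parts of size `k`.
  rcases hkk.lt_or_eq with hlt | heq
  · have hnR : (t : ℝ) * (n / t : ℕ) + (n % t : ℕ) = n := by exact_mod_cast hn
    have hnR' : ((t + 1 : ℕ) : ℝ) * (n / (t + 1) : ℕ) + (n % (t + 1) : ℕ) = n := by
      exact_mod_cast hn'
    have hlt' : ((n / (t + 1) : ℕ) : ℝ) + 1 ≤ (n / t : ℕ) := by exact_mod_cast hlt
    calc turanSecular t (n / t) (n % t) c ≤ n / (c + 2 * (n / t : ℕ)) :=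
          hnR ▸ turanSecular_le_div (Nat.mod_lt n ht).le (hk'.trans hkk) hc
      _ ≤ n / (c + 2 * ((n / (t + 1) : ℕ) + 1)) := by gcongr
      _ < turanSecular (t + 1) (n / (t + 1)) (n % (t + 1)) c :=
          hnR' ▸ div_lt_turanSecular (Nat.mod_lt n t.succ_pos) hk' hc
  · set k := n / t
    have hr : n % t = n % (t + 1) + k := by rw [heq] at hn'; linarith
    have hk1 : (1 : ℝ) ≤ k := by exact_mod_cast heq ▸ hk'
    have key : turanSecular (t + 1) k (n % (t + 1)) c = turanSecular t k (n % (t + 1) + k) c +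
        (k * (k + 1) / (c + 2 * k) - k * (k + 1) / (c + 2 * (k + 1))) := by
      unfold turanSecular; push_cast; ring
    have : k * (k + 1) / (c + 2 * (k + 1)) < k * (k + 1) / (c + 2 * k) := by
      gcongr
      nlinarith
    rw [heq, hr, key]
    linarith

theorem q1_turanGraph_eq {n t : ℕ} (ht : 2 ≤ t) (htn : t ≤ n) :
    ∃ c, 0 ≤ c ∧ turanSecular t (n / t) (n % t) c = 1 ∧ q1 (turanGraph n t) = n + c := by
  obtain ⟨c, hc, hc1⟩ := exists_turanSecular_eq_one ht (Nat.mod_lt n (by omega)).le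
    ((Nat.one_le_div_iff (by omega)).2 htn)
  refine ⟨c, hc, hc1, ?_⟩
  simpa using q1_eq_of_sum_partSize_inv (fun _ _ => turanGraph_adj) hc
    ((sum_partSize_inv_turanGraph n (by omega) c).trans hc1)

theorem q1_turanGraph_strictMono (n t : ℕ) (h2 : 2 ≤ t) (ht : t ≤ n - 1) :
    q1 (turanGraph n t) < q1 (turanGraph n (t + 1)) := by
  have hn : t + 1 ≤ n := by omega
  obtain ⟨c, hc, hc1, hq⟩ := q1_turanGraph_eq (n := n) h2 (by omega)
  obtain ⟨c', hc', hc1', hq'⟩ := q1_turanGraph_eq (n := n) (t := t + 1) (by omega) hn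
  rw [hq, hq', add_lt_add_iff_left]
  by_contra! hle
  have hanti := turanSecular_antitoneOn (Nat.mod_lt n t.succ_pos).le
    ((Nat.one_le_div_iff t.succ_pos).2 hn) hc' hc hle
  linarith [turanSecular_lt_succ (by omega) hn hc]
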